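/- Let P be a Markov kernel on a measurable space E, let B ⊆ E be measurable, and let g : E → ℝ be bounded measurable with 0 ≤ g ≤ 1 and g(x) = 1 for every x ∉ B. Let Q be the sub-kernel Q(x,A) := P(x, A ∩ B^c). Suppose that for every n ≥ 0, sup_{x∈E} (Q^n 𝟙)(x) = 1, i.e. the infimum over starting points of the probability of hitting B within the first n steps is 0 for every n. Then there is no bounded MPE solution (w, λ) for g with λ < 1. -/

import Mathlib

/-!
Put `u := exp ∘ w` and `Pu x := ∫ u ∂P(x)`. The MPE equation reads `u = e^{g - λ} · Pu`, so off
`B` it says `u = r · Pu` with `r := e^{1 - λ} > 1`, while boundedness of `w` gives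
`e^{-C} ≤ Pu ≤ e^C`. Iterating `Pu(x) ≥ ∫_{Bᶜ} u ∂P(x) = r ∫_{Bᶜ} Pu ∂P(x)` along the sub-kernel
yields `e^{-C} rⁿ (Q_{Bᶜ}ⁿ 𝟙)(x) ≤ e^C`, so `sup_x (Q_{Bᶜ}ⁿ 𝟙)(x) ≤ e^{2C} r⁻ⁿ < 1` for large `n`.
-/

open MeasureTheory ProbabilityTheory

/-- `staySeq P C n x = (Q_C^n 𝟙)(x)`, the probability that the chain with kernel `P` started
at `x` lies in `C` at each of the times `1, …, n`, where `Q_C(x,A) = P(x, A ∩ C)` is the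
sub-kernel associated with `C`. -/
noncomputable def staySeq {E : Type*} [MeasurableSpace E] (P : Kernel E E) (C : Set E) :
    ℕ → E → ℝ
  | 0 => fun _ => 1
  | n + 1 => fun x => ∫ y in C, staySeq P C n y ∂(P x)

open Real

section StaySeq

variable {E : Type*} [MeasurableSpace E] (P : Kernel E E) (C : Set E)

theorem staySeq_succ (n : ℕ) (x : E) :
    staySeq P C (n + 1) x = ∫ y in C, staySeq P C n y ∂(P x) := rfl

theorem staySeq_nonneg : ∀ (n : ℕ) (x : E), 0 ≤ staySeq P C n x
  | 0, _ => zero_le_one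
  | n + 1, _ => integral_nonneg fun y => staySeq_nonneg n y

theorem mul_pow_mul_staySeq_le_integral (hC : MeasurableSet C) {u : E → ℝ}
    (hu : ∀ x, Integrable u (P x)) (hu_nonneg : 0 ≤ u) {m r : ℝ} (hm : 0 ≤ m) (hr : 0 ≤ r)
    (hm_le : ∀ x, m ≤ ∫ y, u y ∂(P x)) (hrec : ∀ y ∈ C, r * ∫ z, u z ∂(P y) ≤ u y) :
    ∀ (n : ℕ) (x : E), m * r ^ n * staySeq P C n x ≤ ∫ y, u y ∂(P x)
  | 0, x => by simpa [staySeq] using hm_le x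
  | n + 1, x => by
    have ih := mul_pow_mul_staySeq_le_integral hC hu hu_nonneg hm hr hm_le hrec n
    calc m * r ^ (n + 1) * staySeq P C (n + 1) x
        = ∫ y in C, r * (m * r ^ n * staySeq P C n y) ∂(P x) := by
          rw [staySeq_succ, integral_const_mul, integral_const_mul]; ring
      _ ≤ ∫ y in C, u y ∂(P x) := by
          refine integral_mono_of_nonneg (ae_of_all _ fun y => ?_) (hu x).restrict
            (ae_restrict_of_forall_mem hC fun y hy => ?_)
          · have := staySeq_nonneg P C n y
            positivity
          · exact (mul_le_mul_of_nonneg_left (ih y) hr).trans (hrec y hy)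
      _ ≤ ∫ y, u y ∂(P x) := setIntegral_le_integral (hu x) (ae_of_all _ hu_nonneg)

end StaySeq

section BoundedExp

variable {α : Type*} [MeasurableSpace α] {μ : Measure α} {w : α → ℝ} {C : ℝ}

theorem integrable_exp_of_abs_le [IsFiniteMeasure μ] (hw : Measurable w) (hC : ∀ x, |w x| ≤ C) :
    Integrable (fun x => exp (w x)) μ :=
  .of_bound hw.exp.aestronglyMeasurable (exp C) <| ae_of_all _ fun x => by
    simpa using (abs_le.mp (hC x)).2

theorem exp_neg_le_integral_exp [IsProbabilityMeasure μ] (hw : Measurable w)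
    (hC : ∀ x, |w x| ≤ C) : exp (-C) ≤ ∫ x, exp (w x) ∂μ := by
  simpa using integral_mono (integrable_const (exp (-C)))
    (integrable_exp_of_abs_le (μ := μ) hw hC) fun x => exp_le_exp.mpr (abs_le.mp (hC x)).1

theorem integral_exp_le_exp [IsProbabilityMeasure μ] (hw : Measurable w)
    (hC : ∀ x, |w x| ≤ C) : ∫ x, exp (w x) ∂μ ≤ exp C := by
  simpa using integral_mono (integrable_exp_of_abs_le (μ := μ) hw hC)
    (integrable_const (exp C)) fun x => exp_le_exp.mpr (abs_le.mp (hC x)).2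

end BoundedExp

theorem exists_iSup_lt_one_of_mul_pow_mul_le {ι : Type*} {f : ℕ → ι → ℝ} {m r K : ℝ}
    (hm : 0 < m) (hr : 1 < r) (h : ∀ n i, m * r ^ n * f n i ≤ K) : ∃ n, ⨆ i, f n i < 1 := by
  obtain ⟨n, hn⟩ := pow_unbounded_of_one_lt (max K 0 / m) hr
  have hmr : 0 < m * r ^ n := by positivity
  have hK : max K 0 < m * r ^ n := by rwa [div_lt_iff₀' hm] at hn
  refine ⟨n, lt_of_le_of_lt (Real.iSup_le (fun i => ?_) (by positivity)) ((div_lt_one hmr).mpr hK)⟩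
  rw [le_div_iff₀' hmr]
  exact (h n i).trans (le_max_left K 0)

theorem no_mpe_solution_of_slow_hitting_general {E : Type*} [MeasurableSpace E]
    (P : Kernel E E) [IsMarkovKernel P]
    (B : Set E) (hB : MeasurableSet B)
    (g : E → ℝ)
    (hg_out : ∀ x, x ∉ B → g x = 1)
    (hslow : ∀ n : ℕ, (⨆ x : E, staySeq P Bᶜ n x) = 1) :
    ¬ ∃ (w : E → ℝ) (lam : ℝ), Measurable w ∧ (∃ C : ℝ, ∀ x, |w x| ≤ C) ∧
        (∀ x : E, w x = g x - lam + Real.log (∫ y, Real.exp (w y) ∂(P x))) ∧ lam < 1 := by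
  rintro ⟨w, lam, hw, ⟨C, hC⟩, hmpe, hlam⟩
  have hint x := integrable_exp_of_abs_le (μ := P x) hw hC
  have hrec : ∀ y ∈ Bᶜ, exp (1 - lam) * ∫ z, exp (w z) ∂(P y) ≤ exp (w y) := fun y hy => by
    rw [hmpe y, hg_out y hy, exp_add, exp_log (integral_exp_pos (hint y))]
  have hbound n x :=
    (mul_pow_mul_staySeq_le_integral P Bᶜ hB.compl hint (fun y => (exp_pos _).le) (exp_pos _).le
      (exp_pos _).le (fun x => exp_neg_le_integral_exp hw hC) hrec n x).trans
      (integral_exp_le_exp hw hC)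
  obtain ⟨n, hn⟩ := exists_iSup_lt_one_of_mul_pow_mul_le (exp_pos (-C))
    (one_lt_exp_iff.mpr (sub_pos.mpr hlam)) hbound
  exact hn.ne (hslow n)

/-- If `0 ≤ g ≤ 1`, `g = 1` off `B`, and for every `n` the supremum over starting points of
the probability of avoiding `B` during the first `n` steps equals `1` (i.e. the infimum of
the probability of hitting `B` within `n` steps is `0`), then no bounded MPE solution
`(w, lam)` for `g` with `lam < 1` can exist. -/
theorem no_mpe_solution_of_slow_hitting {E : Type*} [MeasurableSpace E]
    (P : Kernel E E) [IsMarkovKernel P]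
    (B : Set E) (hB : MeasurableSet B)
    (g : E → ℝ) (hg_meas : Measurable g)
    (hg_nonneg : ∀ x, 0 ≤ g x) (hg_le_one : ∀ x, g x ≤ 1)
    (hg_out : ∀ x, x ∉ B → g x = 1)
    (hslow : ∀ n : ℕ, (⨆ x : E, staySeq P Bᶜ n x) = 1) :
    ¬ ∃ (w : E → ℝ) (lam : ℝ), Measurable w ∧ (∃ C : ℝ, ∀ x, |w x| ≤ C) ∧
        (∀ x : E, w x = g x - lam + Real.log (∫ y, Real.exp (w y) ∂(P x))) ∧ lam < 1 :=
  no_mpe_solution_of_slow_hitting_general P B hB g hg_out hslow
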